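/- Let T_{abc} (a,b,c ∈ Fin 4, all indices lowered) be antisymmetric in its last two indices, and define ω̊^a{}_{bc} := ½( T_{bc}{}^a + T_{cb}{}^a − T^a{}_{bc} ), indices raised and lowered with η. Then for all indices a, b: 4·Σ_{c,d} Σ^{cdb} T_{cd a} − δ^b_a · (Σ^{efg}T_{efg}) = 2( 2 ω̊^c{}_{[a d]} ω̊^b{}_c{}^d − 2 ω̊^b{}_{[a d]} ω̊^c{}_c{}^d − ω̊^c{}_{ca} ω̊^d{}_d{}^b + δ^b_a ω̊^c{}_{[c| f} ω̊^d{}_{|d]}{}^f ). -/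

import Mathlib

/-! Since `η` is diagonal, every contraction with it just multiplies a component by the sign
`η a a`, so both sides become explicit quadratic polynomials in the 24 independent components
`T a b c`, `b < c`. The terms proportional to `δ^b_a` match separately: the torsion scalar
equals `ω̊^c{}_{df} ω̊^d{}_c{}^f - ω̊^c{}_{cf} ω̊^d{}_d{}^f`. What remains is checked component by
component. -/

namespace Stmt4

noncomputable section

/-- Minkowski metric diag(1,-1,-1,-1) on `Fin 4` (it equals its own inverse). -/
def η : Fin 4 → Fin 4 → ℝ := fun a b => if a = b then (if a = 0 then 1 else -1) else 0

/-- Torsion trace `T_a := Σ_b η^{bb} T_{bba}`. -/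
def trace (T : Fin 4 → Fin 4 → Fin 4 → ℝ) : Fin 4 → ℝ := fun a => ∑ b, η b b * T b b a

/-- Torsion trace with raised index `T^a := Σ_d η^{ad} T_d`. -/
def traceU (T : Fin 4 → Fin 4 → Fin 4 → ℝ) : Fin 4 → ℝ := fun a => ∑ d, η a d * trace T d

/-- Fully raised torsion `T^{abc}`. -/
def TU (T : Fin 4 → Fin 4 → Fin 4 → ℝ) : Fin 4 → Fin 4 → Fin 4 → ℝ := fun a b c =>
  ∑ d, ∑ e, ∑ f, η a d * η b e * η c f * T d e f

/-- Superpotential `Σ^{abc} := ¼(T^{abc} + T^{bac} − T^{cab}) + ½(η^{ac}T^b − η^{ab}T^c)`. -/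
def Sup (T : Fin 4 → Fin 4 → Fin 4 → ℝ) : Fin 4 → Fin 4 → Fin 4 → ℝ := fun a b c =>
  (1/4) * (TU T a b c + TU T b a c - TU T c a b)
    + (1/2) * (η a c * traceU T b - η a b * traceU T c)

/-- Torsion scalar `T := Σ^{efg} T_{efg}`. -/
def torsionScalar (T : Fin 4 → Fin 4 → Fin 4 → ℝ) : ℝ :=
  ∑ e, ∑ f, ∑ g, Sup T e f g * T e f g

/-- Levi-Civita spin connection `ω̊^a{}_{bc} := ½(T_{bc}{}^a + T_{cb}{}^a − T^a{}_{bc})`. -/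
def spin (T : Fin 4 → Fin 4 → Fin 4 → ℝ) : Fin 4 → Fin 4 → Fin 4 → ℝ := fun a b c =>
  (1/2) * ((∑ d, η a d * T b c d) + (∑ d, η a d * T c b d) - (∑ d, η a d * T d b c))

/-- Spin connection with third index raised: `ω̊^a{}_b{}^d := η^{de} ω̊^a{}_{be}`. -/
def spinU3 (T : Fin 4 → Fin 4 → Fin 4 → ℝ) : Fin 4 → Fin 4 → Fin 4 → ℝ := fun a b d =>
  ∑ e, η d e * spin T a b e

section

variable (T : Fin 4 → Fin 4 → Fin 4 → ℝ)

lemma sum_η_mul (a : Fin 4) (g : Fin 4 → ℝ) : ∑ d, η a d * g d = η a a * g a :=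
  Fintype.sum_eq_single a fun d hd => by simp [η, Ne.symm hd]

lemma TU_eq (a b c : Fin 4) : TU T a b c = η a a * η b b * η c c * T a b c := by
  simp only [TU, mul_assoc, ← Finset.mul_sum, sum_η_mul]

lemma traceU_eq (a : Fin 4) : traceU T a = η a a * trace T a :=
  sum_η_mul a _

lemma spin_eq (a b c : Fin 4) : spin T a b c = η a a * (T b c a + T c b a - T a b c) / 2 := by
  simp only [spin, sum_η_mul]
  ring

lemma spinU3_eq (a b c : Fin 4) : spinU3 T a b c = η c c * spin T a b c :=
  sum_η_mul c _

lemma torsion_diag_eq_zero (hT : ∀ a b c, T a b c = -T a c b) (a b : Fin 4) : T a b b = 0 := by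
  linarith [hT a b b]

theorem torsionScalar_eq_spin (hT : ∀ a b c, T a b c = -T a c b) :
    torsionScalar T = ∑ f, ∑ c, ∑ d, spin T c d f * spinU3 T d c f
      - ∑ f, (∑ c, spin T c c f) * (∑ d, spinU3 T d d f) := by
  simp only [torsionScalar, Sup, trace, TU_eq, traceU_eq, spinU3_eq, spin_eq, Fin.sum_univ_four]
  simp only [η, Fin.isValue, Fin.reduceEq, reduceIte]
  simp only [torsion_diag_eq_zero T hT, hT _ 1 0, hT _ 2 0, hT _ 2 1, hT _ 3 0, hT _ 3 1, hT _ 3 2]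
  ring

theorem four_mul_sum_Sup_mul_eq_spin (hT : ∀ a b c, T a b c = -T a c b) (a b : Fin 4) :
    4 * (∑ c, ∑ d, Sup T c d b * T c d a) =
      2 * (2 * (∑ c, ∑ d, ((spin T c a d - spin T c d a) / 2) * spinU3 T b c d)
        - 2 * (∑ c, ∑ d, ((spin T b a d - spin T b d a) / 2) * spinU3 T c c d)
        - (∑ c, spin T c c a) * (∑ d, spinU3 T d d b)) := by
  simp only [Sup, trace, TU_eq, traceU_eq, spinU3_eq, spin_eq, Fin.sum_univ_four]
  fin_cases a <;> fin_cases b <;>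
    simp only [η, Fin.isValue, Fin.reduceFinMk, Fin.reduceEq, reduceIte] <;>
    simp only [torsion_diag_eq_zero T hT, hT _ 1 0, hT _ 2 0, hT _ 2 1, hT _ 3 0, hT _ 3 1,
      hT _ 3 2] <;>
    ring

end

theorem energy_momentum_from_spin_connection (T : Fin 4 → Fin 4 → Fin 4 → ℝ)
    (hT : ∀ a b c, T a b c = -T a c b) :
    ∀ a b : Fin 4,
      4 * (∑ c, ∑ d, Sup T c d b * T c d a)
          - (if a = b then (1 : ℝ) else 0) * torsionScalar T =
        2 * (2 * (∑ c, ∑ d, ((spin T c a d - spin T c d a) / 2) * spinU3 T b c d)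
          - 2 * (∑ c, ∑ d, ((spin T b a d - spin T b d a) / 2) * spinU3 T c c d)
          - (∑ c, spin T c c a) * (∑ d, spinU3 T d d b)
          + (if a = b then (1 : ℝ) else 0) *
              ((1 / 2) * ((∑ f, (∑ c, spin T c c f) * (∑ d, spinU3 T d d f))
                - ∑ f, ∑ c, ∑ d, spin T c d f * spinU3 T d c f))) := by
  intro a b
  rw [four_mul_sum_Sup_mul_eq_spin T hT, torsionScalar_eq_spin T hT]
  ring

end

end Stmt4
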